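/- arXiv:1411.5713 — 7 statements merged into one kernel-verified Lean document; each statement's English description precedes it below -/
import Mathlib

section
/- For any Bernoulli parameters p, q in (0,1), KL(Ber(p), Ber(q)) <= (p-q)^2 / (q*(1-q)). -/
/-- Upper bound on the Bernoulli KL divergence by chi-square-type quantity. -/
theorem bernoulli_kl_le (p q : ℝ) (hp : p ∈ Set.Ioo (0:ℝ) 1) (hq : q ∈ Set.Ioo (0:ℝ) 1) :
    p * Real.log (p / q) + (1 - p) * Real.log ((1 - p) / (1 - q)) ≤ (p - q) ^ 2 / (q * (1 - q)) := by
  obtain ⟨hp0, hp1⟩ := hp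
  obtain ⟨hq0, hq1⟩ := hq
  have hq1' : (0:ℝ) < 1 - q := by linarith
  have hp1' : (0:ℝ) < 1 - p := by linarith
  have h1 : Real.log (p / q) ≤ p / q - 1 :=
    Real.log_le_sub_one_of_pos (by positivity)
  have h2 : Real.log ((1 - p) / (1 - q)) ≤ (1 - p) / (1 - q) - 1 :=
    Real.log_le_sub_one_of_pos (by positivity)
  have key : p * (p / q - 1) + (1 - p) * ((1 - p) / (1 - q) - 1) = (p - q) ^ 2 / (q * (1 - q)) := by
    field_simp
    ring
  calc p * Real.log (p / q) + (1 - p) * Real.log ((1 - p) / (1 - q))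
      ≤ p * (p / q - 1) + (1 - p) * ((1 - p) / (1 - q) - 1) := by
        gcongr
    _ = (p - q) ^ 2 / (q * (1 - q)) := key
end

section
/- For the exponential weights algorithm with learning rate eta > 0 on K experts with losses in [0,1], the expected loss at each round exceeds the mix loss by at most eta/8: sum_i w_{i,t} * l_{i,t} <= m_t + eta/8. Consequently the regret after T rounds satisfies sum_t sum_i w_{i,t}*l_{i,t} - min_i L_{i,T} <= log(K)/eta + eta*T/8. -/
/-! Hoeffding's lemma, applied to the loss of an expert drawn according to the current
weights, bounds the expected loss by the mix loss plus `η/8`. The mix loss of round `t` is the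
drop `(log Φₜ - log Φₜ₊₁) / η` of the potential `Φₜ = ∑ᵢ exp (-η Lᵢₜ)`, so the mix losses
telescope to `(log K - log Φ_T) / η`, and `Φ_T ≥ exp (-η Lᵢ_T)` for every expert `i`. -/

open Finset Real ProbabilityTheory MeasureTheory

theorem log_sum_mul_exp_le_of_mem_Icc {ι : Type*} [Fintype ι] {w : ι → ℝ}
    (hw0 : ∀ i, 0 ≤ w i) (hw1 : ∑ i, w i = 1) {x : ι → ℝ} {a b : ℝ}
    (hx : ∀ i, x i ∈ Set.Icc a b) (t : ℝ) :
    log (∑ i, w i * exp (t * x i)) ≤ t * ∑ i, w i * x i + t ^ 2 * (b - a) ^ 2 / 8 := by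
  let _ : MeasurableSpace ι := ⊤
  let p : PMF ι := .ofFintype (fun i ↦ .ofReal (w i)) <| by
    rw [← ENNReal.ofReal_sum_of_nonneg fun i _ ↦ hw0 i, hw1, ENNReal.ofReal_one]
  have integral_eq (f : ι → ℝ) : ∫ i, f i ∂p.toMeasure = ∑ i, w i * f i := by
    simp [p, PMF.integral_eq_sum, ENNReal.toReal_ofReal (hw0 _)]
  have hpos := mgf_pos (μ := p.toMeasure) (X := x) (t := t) .of_finite
  have hoeffding := (hasSubgaussianMGF_of_mem_Icc (μ := p.toMeasure) (X := x)
    Measurable.of_discrete.aemeasurable (ae_of_all _ hx)).mgf_le t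
  simp_rw [sub_eq_add_neg, mgf_add_const, mgf, integral_eq] at hoeffding hpos
  rw [← le_div_iff₀ (exp_pos _), ← exp_sub] at hoeffding
  rw [log_le_iff_le_exp hpos]
  refine hoeffding.trans_eq (congrArg exp ?_)
  push_cast
  rw [norm_eq_abs, div_pow, sq_abs]
  ring

noncomputable section

namespace ExpWeights

variable {ι : Type*} {T : ℕ}

def cumLoss (l : Fin T → ι → ℝ) (n : ℕ) (i : ι) : ℝ :=
  ∑ s ∈ univ.filter (fun s : Fin T ↦ s.val < n), l s i

theorem cumLoss_zero (l : Fin T → ι → ℝ) : cumLoss l 0 = 0 := by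
  ext i; simp [cumLoss]

theorem cumLoss_succ (l : Fin T → ι → ℝ) (t : Fin T) :
    cumLoss l (t + 1) = cumLoss l t + l t := by
  ext i
  have : univ.filter (fun s : Fin T ↦ s.val < t + 1) =
      insert t (univ.filter fun s ↦ s.val < t.val) := by
    ext s; simp only [mem_filter, mem_univ, true_and, mem_insert, Fin.ext_iff]; omega
  rw [cumLoss, this, sum_insert (by simp), add_comm]
  rfl

theorem cumLoss_self (l : Fin T → ι → ℝ) (i : ι) : cumLoss l T i = ∑ t, l t i := by
  simp [cumLoss]

variable [Fintype ι]

def mixLoss (η : ℝ) (w x : ι → ℝ) : ℝ :=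
  -(1 / η) * log (∑ i, w i * exp (-η * x i))

theorem sum_mul_le_mixLoss_add {η : ℝ} (hη : 0 < η) {w : ι → ℝ} (hw0 : ∀ i, 0 ≤ w i)
    (hw1 : ∑ i, w i = 1) {x : ι → ℝ} {a b : ℝ} (hx : ∀ i, x i ∈ Set.Icc a b) :
    ∑ i, w i * x i ≤ mixLoss η w x + η * (b - a) ^ 2 / 8 := by
  have hoeffding :
      log (∑ i, w i * exp (-η * x i)) ≤ (-∑ i, w i * x i + η * (b - a) ^ 2 / 8) * η :=
    (log_sum_mul_exp_le_of_mem_Icc hw0 hw1 hx (-η)).trans_eq (by ring)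
  have := (div_le_iff₀ hη).2 hoeffding
  rw [mixLoss, neg_mul, one_div, ← div_eq_inv_mul]
  linarith

def potential (η : ℝ) (L : ι → ℝ) : ℝ :=
  ∑ i, exp (-η * L i)

def weights (η : ℝ) (L : ι → ℝ) (i : ι) : ℝ :=
  exp (-η * L i) / potential η L

theorem potential_pos [Nonempty ι] (η : ℝ) (L : ι → ℝ) : 0 < potential η L :=
  sum_pos (fun _ _ ↦ exp_pos _) univ_nonempty

theorem weights_nonneg (η : ℝ) (L : ι → ℝ) (i : ι) : 0 ≤ weights η L i := by
  unfold weights potential; positivity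

theorem sum_weights [Nonempty ι] (η : ℝ) (L : ι → ℝ) : ∑ i, weights η L i = 1 := by
  simp only [weights, ← sum_div]
  exact div_self (potential_pos η L).ne'

theorem mixLoss_weights [Nonempty ι] (η : ℝ) (L x : ι → ℝ) :
    mixLoss η (weights η L) x = (log (potential η L) - log (potential η (L + x))) / η := by
  have : ∑ i, weights η L i * exp (-η * x i) = potential η (L + x) / potential η L := by
    simp_rw [weights, div_mul_eq_mul_div, ← sum_div, ← exp_add, potential, Pi.add_apply,
      mul_add]
  rw [mixLoss, this, log_div (potential_pos η _).ne' (potential_pos η _).ne']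
  ring

theorem neg_mul_le_log_potential (η : ℝ) (L : ι → ℝ) (i : ι) :
    -η * L i ≤ log (potential η L) := by
  have : Nonempty ι := ⟨i⟩
  rw [le_log_iff_exp_le (potential_pos η L)]
  exact single_le_sum (fun j _ ↦ (exp_pos (-η * L j)).le) (mem_univ i)

theorem sum_mixLoss_weights_cumLoss [Nonempty ι] (η : ℝ) (l : Fin T → ι → ℝ) :
    ∑ t : Fin T, mixLoss η (weights η (cumLoss l t)) (l t) =
      (log (Fintype.card ι) - log (potential η (cumLoss l T))) / η := by
  simp_rw [mixLoss_weights, ← cumLoss_succ, ← sum_div]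
  rw [Fin.sum_univ_eq_sum_range (fun n ↦ log (potential η (cumLoss l n)) -
    log (potential η (cumLoss l (n + 1)))), sum_range_sub', cumLoss_zero]
  simp [potential]

theorem sum_mixLoss_weights_cumLoss_le {η : ℝ} (hη : 0 < η) (l : Fin T → ι → ℝ) (i : ι) :
    ∑ t : Fin T, mixLoss η (weights η (cumLoss l t)) (l t) ≤
      log (Fintype.card ι) / η + ∑ t, l t i := by
  have : Nonempty ι := ⟨i⟩
  have h := neg_mul_le_log_potential η (cumLoss l T) i
  rw [cumLoss_self] at h
  have : -∑ t, l t i ≤ log (potential η (cumLoss l T)) / η := by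
    rw [le_div_iff₀ hη]; linarith
  rw [sum_mixLoss_weights_cumLoss, sub_div]
  linarith

end ExpWeights

end

open ExpWeights in
/-- The expected loss exceeds the mix loss by at most `η/8` at each round, and the
exponential weights regret is at most `log K / η + η T / 8`. -/
theorem exp_weights_regret_bound (K T : ℕ) (hK : 0 < K) (η : ℝ) (hη : 0 < η)
    (l : Fin T → Fin K → ℝ) (hl : ∀ t i, l t i ∈ Set.Icc (0:ℝ) 1)
    (L : Fin T → Fin K → ℝ) (hL : ∀ t i, L t i = ∑ s ∈ univ.filter (· < t), l s i)
    (w : Fin T → Fin K → ℝ)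
    (hw : ∀ t i, w t i = Real.exp (-η * L t i) / ∑ j, Real.exp (-η * L t j))
    (m : Fin T → ℝ)
    (hm : ∀ t, m t = -(1 / η) * Real.log (∑ i, w t i * Real.exp (-η * l t i))) :
    (∀ t, ∑ i, w t i * l t i ≤ m t + η / 8) ∧
    (∑ t, ∑ i, w t i * l t i) - (⨅ i, ∑ t, l t i) ≤ Real.log K / η + η * T / 8 := by
  have : Nonempty (Fin K) := ⟨⟨0, hK⟩⟩
  have hw : ∀ t, w t = weights η (cumLoss l t) := fun t ↦ funext fun i ↦ by
    simp only [hw, hL, weights, potential, cumLoss, Fin.lt_def]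
  have hm : ∀ t, m t = mixLoss η (w t) (l t) := hm
  have round (t : Fin T) : ∑ i, w t i * l t i ≤ m t + η / 8 := by
    rw [hm, hw]
    simpa using sum_mul_le_mixLoss_add hη (weights_nonneg η _) (sum_weights η _) (hl t)
  refine ⟨round, ?_⟩
  have total : ∑ t, ∑ i, w t i * l t i ≤ ∑ t, m t + η * T / 8 :=
    calc _ ≤ ∑ t, (m t + η / 8) := sum_le_sum fun t _ ↦ round t
      _ = ∑ t, m t + η * T / 8 := by
        simp only [sum_add_distrib, sum_const, card_univ, Fintype.card_fin, nsmul_eq_mul]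
        ring
  have best : ∑ t, m t - log K / η ≤ ⨅ i, ∑ t, l t i := le_ciInf fun i ↦ by
    have := sum_mixLoss_weights_cumLoss_le hη l i
    simp only [← hw, ← hm, Fintype.card_fin] at this
    linarith
  linarith
end

section
/- Let P and Q be probability measures on a measurable space and A any measurable event. Then P(A) + Q(A^c) >= (1/2)*exp(-KL(P,Q)), where KL(P,Q) is the Kullback-Leibler divergence. -/
/-!
Let `t = dP/dQ` and let `BC = ∫ √t dQ` be the Bhattacharyya coefficient. Jensen's inequality for
`exp` under `P`, together with `∫ f dP = ∫ t f dQ`, gives `exp (-KL/2) ≤ ∫ t^{-1/2} dP = BC`.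
Splitting `BC` over `A` and `Aᶜ` and applying Cauchy–Schwarz on each piece and then to the two
resulting terms gives `BC ≤ √(P A + Q Aᶜ) √(Q A + P Aᶜ) ≤ √(P A + Q Aᶜ) √2`; squaring concludes.
-/

open MeasureTheory Real

lemma Real.sqrt_mul_sqrt_add_sqrt_mul_sqrt_le {a b c d : ℝ} (ha : 0 ≤ a) (hb : 0 ≤ b)
    (hc : 0 ≤ c) (hd : 0 ≤ d) : √a * √b + √c * √d ≤ √(a + c) * √(b + d) := by
  simpa [Fin.sum_univ_two] using
    Real.sum_sqrt_mul_sqrt_le Finset.univ (f := ![a, c]) (g := ![b, d])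
      (by simp [Fin.forall_fin_two, ha, hc]) (by simp [Fin.forall_fin_two, hb, hd])

lemma Real.mul_exp_neg_log_div_two {t : ℝ} (ht : 0 ≤ t) : t * exp (-log t / 2) = √t := by
  rcases ht.eq_or_lt with rfl | ht
  · simp
  · rw [neg_div, ← log_sqrt ht.le, exp_neg, exp_log (sqrt_pos.2 ht), ← div_eq_mul_inv, div_sqrt]

namespace MeasureTheory.Measure

variable {Ω : Type*} [MeasurableSpace Ω] {μ ν : Measure Ω}

lemma memLp_two_sqrt_toReal_rnDeriv [IsFiniteMeasure μ] :
    MemLp (fun x ↦ √(μ.rnDeriv ν x).toReal) 2 ν := by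
  have hmeas : AEStronglyMeasurable (fun x ↦ √(μ.rnDeriv ν x).toReal) ν :=
    (measurable_rnDeriv μ ν).ennreal_toReal.sqrt.aestronglyMeasurable
  rw [memLp_two_iff_integrable_sq hmeas]
  exact integrable_toReal_rnDeriv.congr
    (ae_of_all _ fun x ↦ (sq_sqrt ENNReal.toReal_nonneg).symm)

lemma integrable_sqrt_toReal_rnDeriv [IsFiniteMeasure μ] [IsFiniteMeasure ν] :
    Integrable (fun x ↦ √(μ.rnDeriv ν x).toReal) ν :=
  memLp_two_sqrt_toReal_rnDeriv.integrable one_le_two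

lemma setIntegral_sqrt_toReal_rnDeriv_le [IsFiniteMeasure μ] [IsFiniteMeasure ν] (hμν : μ ≪ ν)
    (s : Set Ω) :
    ∫ x in s, √(μ.rnDeriv ν x).toReal ∂ν ≤ √(μ s).toReal * √(ν s).toReal := by
  have hCS := integral_mul_le_Lp_mul_Lq_of_nonneg (μ := ν.restrict s) Real.HolderConjugate.two_two
    (ae_of_all _ fun x ↦ sqrt_nonneg (μ.rnDeriv ν x).toReal)
    (ae_of_all _ fun _ ↦ zero_le_one)
    (by simpa using memLp_two_sqrt_toReal_rnDeriv.restrict s) (by simpa using memLp_const 1)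
  have hsq : ∀ x, √(μ.rnDeriv ν x).toReal ^ (2 : ℝ) = (μ.rnDeriv ν x).toReal := fun x ↦ by
    rw [rpow_two, sq_sqrt ENNReal.toReal_nonneg]
  simp only [mul_one, one_rpow, hsq, setIntegral_toReal_rnDeriv hμν, setIntegral_const,
    smul_eq_mul] at hCS
  rw [sqrt_eq_rpow, sqrt_eq_rpow]
  simpa [Measure.real] using hCS

lemma exp_neg_integral_llr_div_two_le [IsProbabilityMeasure μ] [IsFiniteMeasure ν] (hμν : μ ≪ ν)
    (hint : Integrable (llr μ ν) μ) :
    exp (-(∫ x, llr μ ν x ∂μ) / 2) ≤ ∫ x, √(μ.rnDeriv ν x).toReal ∂ν := by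
  have hdensity : ∀ x, (μ.rnDeriv ν x).toReal * exp (-llr μ ν x / 2) = √(μ.rnDeriv ν x).toReal :=
    fun x ↦ mul_exp_neg_log_div_two ENNReal.toReal_nonneg
  have hint_exp : Integrable (fun x ↦ exp (-llr μ ν x / 2)) μ :=
    (integrable_toReal_rnDeriv_mul_iff hμν).1 (by simpa only [hdensity] using
      integrable_sqrt_toReal_rnDeriv)
  calc exp (-(∫ x, llr μ ν x ∂μ) / 2) = exp (∫ x, -llr μ ν x / 2 ∂μ) := by
        rw [integral_div, integral_neg]
    _ ≤ ∫ x, exp (-llr μ ν x / 2) ∂μ :=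
        convexOn_exp.map_integral_le continuous_exp.continuousOn isClosed_univ
          (ae_of_all _ fun _ ↦ Set.mem_univ _) (hint.neg.div_const 2) hint_exp
    _ = ∫ x, √(μ.rnDeriv ν x).toReal ∂ν := by
        simp only [← integral_toReal_rnDeriv_mul hμν, hdensity]

end MeasureTheory.Measure

open MeasureTheory.Measure in
/-- Bretagnolle–Huber inequality: for probability measures `P, Q` and any measurable event
`A`, `P(A) + Q(Aᶜ) ≥ (1/2) exp(-KL(P, Q))`, where `KL(P, Q) = ∫ log (dP/dQ) dP`
(the case `KL = +∞`, i.e. `¬ P ≪ Q` or non-integrable log-likelihood ratio, is trivial). -/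
theorem bretagnolle_huber {Ω : Type*} [MeasurableSpace Ω] (P Q : Measure Ω)
    [IsProbabilityMeasure P] [IsProbabilityMeasure Q]
    (hPQ : P ≪ Q) (hint : Integrable (llr P Q) P)
    (A : Set Ω) (hA : MeasurableSet A) :
    (P A).toReal + (Q Aᶜ).toReal ≥ (1 / 2) * Real.exp (-∫ ω, llr P Q ω ∂P) := by
  have hBC : exp (-(∫ ω, llr P Q ω ∂P) / 2) ≤ √((P A).toReal + (Q Aᶜ).toReal) * √2 := calc
    _ ≤ ∫ ω, √(P.rnDeriv Q ω).toReal ∂Q := exp_neg_integral_llr_div_two_le hPQ hint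
    _ = (∫ ω in A, √(P.rnDeriv Q ω).toReal ∂Q) + ∫ ω in Aᶜ, √(P.rnDeriv Q ω).toReal ∂Q :=
        (integral_add_compl hA integrable_sqrt_toReal_rnDeriv).symm
    _ ≤ √(P A).toReal * √(Q A).toReal + √(Q Aᶜ).toReal * √(P Aᶜ).toReal := by
        grw [setIntegral_sqrt_toReal_rnDeriv_le hPQ, setIntegral_sqrt_toReal_rnDeriv_le hPQ,
          mul_comm √(P Aᶜ).toReal]
    _ ≤ √((P A).toReal + (Q Aᶜ).toReal) * √((Q A).toReal + (P Aᶜ).toReal) :=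
        sqrt_mul_sqrt_add_sqrt_mul_sqrt_le (by positivity) (by positivity) (by positivity)
          (by positivity)
    _ ≤ √((P A).toReal + (Q Aᶜ).toReal) * √2 := by
        have hQA : (Q A).toReal ≤ 1 := measureReal_le_one
        have hPAc : (P Aᶜ).toReal ≤ 1 := measureReal_le_one
        gcongr
        linarith
  calc (1 / 2) * exp (-∫ ω, llr P Q ω ∂P) = (1 / 2) * exp (-(∫ ω, llr P Q ω ∂P) / 2) ^ 2 := by
        rw [← exp_nat_mul]; ring_nf
    _ ≤ (1 / 2) * (√((P A).toReal + (Q Aᶜ).toReal) * √2) ^ 2 := by gcongr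
    _ = (P A).toReal + (Q Aᶜ).toReal := by
        rw [mul_pow, sq_sqrt (by positivity), sq_sqrt zero_le_two]; ring
end

section
/- Let X_1,...,X_n be i.i.d. random variables taking values in [0,1] with mean mu, and let hat_mu = (1/n)*sum X_i. Then for any x > mu, P(hat_mu >= x) <= exp(-n*kl(x,mu)), where kl is the binary KL divergence. -/
/-!
Bounding `exp (t a)` on `[0,1]` by its chord shows that a `[0,1]`-valued variable of mean `μ` has
moment generating function at most `1 - μ + μ eᵗ`, that of a Bernoulli(`μ`) variable. Independence
multiplies these bounds, and Markov's inequality for `exp (t ∑ Xᵢ)` gives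
`P(∑ Xᵢ ≥ n x) ≤ (e^{-t x} (1 - μ + μ eᵗ))ⁿ` for all `t ≥ 0`. For `x < 1` the optimal
`t = log (x (1 - μ) / (μ (1 - x)))` turns the base into `exp (-kl(x, μ))`; for `x = 1` one lets
`t → ∞`, and for `x > 1` the event is null.
-/

open MeasureTheory ProbabilityTheory Finset Real Filter Topology

lemma exp_mul_le_one_sub_add_mul_exp {a : ℝ} (t : ℝ) (ha : a ∈ Set.Icc (0 : ℝ) 1) :
    exp (t * a) ≤ 1 - a + a * exp t := by
  have h := convexOn_exp.2 (Set.mem_univ 0) (Set.mem_univ t) (sub_nonneg.2 ha.2) ha.1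
    (sub_add_cancel 1 a)
  simpa [mul_comm t a] using h

section MGF

variable {Ω : Type*} [MeasurableSpace Ω] {P : Measure Ω} [IsProbabilityMeasure P]

lemma mgf_le_one_sub_add_mul_exp {Y : Ω → ℝ} (hY : AEMeasurable Y P)
    (hbdd : ∀ᵐ ω ∂P, Y ω ∈ Set.Icc (0 : ℝ) 1) (t : ℝ) :
    mgf Y P t ≤ 1 - P[Y] + P[Y] * exp t := by
  have hint : Integrable Y P := Integrable.of_mem_Icc 0 1 hY hbdd
  calc mgf Y P t ≤ ∫ ω, (1 - Y ω + Y ω * exp t) ∂P :=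
        integral_mono_ae (integrable_exp_mul_of_mem_Icc hY hbdd)
          (((integrable_const 1).sub hint).add (hint.mul_const _))
          (by filter_upwards [hbdd] with ω hω using exp_mul_le_one_sub_add_mul_exp t hω)
    _ = 1 - P[Y] + P[Y] * exp t := by
        rw [integral_add (f := fun ω ↦ 1 - Y ω) ((integrable_const 1).sub hint) (hint.mul_const _),
          integral_sub (integrable_const 1) hint, integral_mul_const]
        simp

lemma measureReal_card_mul_le_sum_le_pow {ι : Type*} {X : ι → Ω → ℝ}
    (hmeas : ∀ i, Measurable (X i)) (hindep : iIndepFun X P)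
    (hbdd : ∀ i, ∀ᵐ ω ∂P, X i ω ∈ Set.Icc (0 : ℝ) 1) {μ : ℝ} (hmean : ∀ i, P[X i] = μ)
    (s : Finset ι) (x : ℝ) {t : ℝ} (ht : 0 ≤ t) :
    P.real {ω | #s * x ≤ ∑ i ∈ s, X i ω} ≤ (exp (-t * x) * (1 - μ + μ * exp t)) ^ #s := by
  have hint : Integrable (fun ω ↦ exp (t * (∑ i ∈ s, X i) ω)) P :=
    hindep.integrable_exp_mul_sum hmeas fun i _ ↦
      integrable_exp_mul_of_mem_Icc (hmeas i).aemeasurable (hbdd i)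
  have hmgf : ∀ i ∈ s, mgf (X i) P t ≤ 1 - μ + μ * exp t := fun i _ ↦
    hmean i ▸ mgf_le_one_sub_add_mul_exp (hmeas i).aemeasurable (hbdd i) t
  calc P.real {ω | #s * x ≤ ∑ i ∈ s, X i ω}
      ≤ exp (-t * (#s * x)) * mgf (∑ i ∈ s, X i) P t := by
        simpa only [Finset.sum_apply] using measure_ge_le_exp_mul_mgf _ ht hint
    _ = exp (-t * x) ^ #s * ∏ i ∈ s, mgf (X i) P t := by
        rw [hindep.mgf_sum hmeas, ← exp_nat_mul]
        ring_nf
    _ ≤ exp (-t * x) ^ #s * (1 - μ + μ * exp t) ^ #s := by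
        gcongr
        simpa using Finset.prod_le_prod (fun i _ ↦ mgf_nonneg) hmgf
    _ = (exp (-t * x) * (1 - μ + μ * exp t)) ^ #s := (mul_pow _ _ _).symm

end MGF

noncomputable def klBernoulli (x μ : ℝ) : ℝ := x * log (x / μ) + (1 - x) * log ((1 - x) / (1 - μ))

lemma klBernoulli_one (μ : ℝ) : klBernoulli 1 μ = -log μ := by
  simp [klBernoulli]

-- `t = logit x - logit μ` is the critical point of `t ↦ -t x + log (1 - μ + μ eᵗ)`.
lemma exists_exp_neg_mul_mul_eq_exp_neg_klBernoulli {μ x : ℝ} (hμ : 0 < μ) (hμx : μ < x)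
    (hx : x < 1) :
    ∃ t, 0 ≤ t ∧ exp (-t * x) * (1 - μ + μ * exp t) = exp (-klBernoulli x μ) := by
  have hx0 : 0 < x := hμ.trans hμx
  have h1x : 0 < 1 - x := sub_pos.2 hx
  have h1μ : 0 < 1 - μ := by linarith
  refine ⟨log x - log μ + log (1 - μ) - log (1 - x), ?_, ?_⟩
  · linarith [log_le_log hμ hμx.le, log_le_log h1x (by linarith : 1 - x ≤ 1 - μ)]
  · have hbase : 1 - μ + μ * exp (log x - log μ + log (1 - μ) - log (1 - x)) =
        exp (log (1 - μ) - log (1 - x)) := by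
      simp only [exp_sub, exp_add, exp_log hx0, exp_log hμ, exp_log h1x, exp_log h1μ]
      field_simp
      ring
    rw [hbase, ← exp_add, klBernoulli, log_div hx0.ne' hμ.ne', log_div h1x.ne' h1μ.ne']
    ring_nf

lemma tendsto_exp_neg_mul_one_sub_add_mul_exp (μ : ℝ) :
    Tendsto (fun t ↦ exp (-t * 1) * (1 - μ + μ * exp t)) atTop (𝓝 μ) := by
  have heq : ∀ t, exp (-t * 1) * (1 - μ + μ * exp t) = (1 - μ) * exp (-t) + μ := fun t ↦ by
    rw [mul_one, mul_add, mul_left_comm, ← exp_add, neg_add_cancel, exp_zero]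
    ring
  simpa only [heq, mul_zero, zero_add] using
    (tendsto_exp_neg_atTop_nhds_zero.const_mul (1 - μ)).add_const μ

lemma le_exp_neg_mul_klBernoulli {a μ x : ℝ} (n : ℕ) (hμ : 0 < μ) (hμx : μ < x) (hx : x ≤ 1)
    (h : ∀ t, 0 ≤ t → a ≤ (exp (-t * x) * (1 - μ + μ * exp t)) ^ n) :
    a ≤ exp (-n * klBernoulli x μ) := by
  rcases hx.lt_or_eq with hx1 | rfl
  · obtain ⟨t, ht, heq⟩ := exists_exp_neg_mul_mul_eq_exp_neg_klBernoulli hμ hμx hx1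
    calc a ≤ exp (-klBernoulli x μ) ^ n := heq ▸ h t ht
      _ = exp (-n * klBernoulli x μ) := by rw [← exp_nat_mul]; ring_nf
  · have hpow : exp (-n * klBernoulli 1 μ) = μ ^ n := by
      rw [klBernoulli_one, neg_mul_neg, exp_nat_mul, exp_log hμ]
    exact hpow ▸ ge_of_tendsto ((tendsto_exp_neg_mul_one_sub_add_mul_exp μ).pow n)
      ((eventually_ge_atTop 0).mono h)

theorem chernoff_kl_bound_general {Ω : Type*} [MeasurableSpace Ω] (P : Measure Ω)
    [IsProbabilityMeasure P] (n : ℕ) (X : ℕ → Ω → ℝ)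
    (hmeas : ∀ i, Measurable (X i))
    (hindep : iIndepFun X P)
    (hbdd : ∀ i, ∀ᵐ ω ∂P, X i ω ∈ Set.Icc (0:ℝ) 1)
    (μ : ℝ) (hμ : μ ∈ Set.Ioo (0:ℝ) 1) (hmean : ∀ i, ∫ ω, X i ω ∂P = μ)
    (x : ℝ) (hx : μ < x) :
    (P {ω | x ≤ (∑ i ∈ range n, X i ω) / n}).toReal ≤
      Real.exp (-(n : ℝ) * (x * Real.log (x / μ) + (1 - x) * Real.log ((1 - x) / (1 - μ)))) := by
  rcases le_or_gt x 1 with hx1 | hx1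
  · have hsub : {ω | x ≤ (∑ i ∈ range n, X i ω) / n} ⊆
        {ω | (#(range n) : ℝ) * x ≤ ∑ i ∈ range n, X i ω} := by
      intro ω hω
      rcases n.eq_zero_or_pos with rfl | hn
      · simp
      · simpa [mul_comm, ← le_div_iff₀ (Nat.cast_pos.2 hn : (0 : ℝ) < n)] using hω
    calc P.real {ω | x ≤ (∑ i ∈ range n, X i ω) / n}
        ≤ P.real {ω | (#(range n) : ℝ) * x ≤ ∑ i ∈ range n, X i ω} := measureReal_mono hsub
      _ ≤ exp (-n * klBernoulli x μ) := by
        refine le_exp_neg_mul_klBernoulli n hμ.1 hx hx1 fun t ht ↦ ?_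
        simpa using measureReal_card_mul_le_sum_le_pow hmeas hindep hbdd hmean (range n) x ht
  · have hnull : P {ω | x ≤ (∑ i ∈ range n, X i ω) / n} = 0 := by
      refine measure_eq_zero_iff_ae_notMem.2 ?_
      filter_upwards [ae_all_iff.2 hbdd] with ω hω
      have hsum : ∑ i ∈ range n, X i ω ≤ n := by
        simpa using Finset.sum_le_sum fun i (_ : i ∈ range n) ↦ (hω i).2
      exact not_le.2 ((div_le_one_of_le₀ hsum n.cast_nonneg).trans_lt hx1)
    rw [hnull, ENNReal.toReal_zero]
    positivity

/-- Chernoff bound in KL form: for i.i.d. `[0,1]`-valued random variables with mean `μ`,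
`P(μ̂ₙ ≥ x) ≤ exp(-n · kl(x, μ))` for every `x > μ`. -/
theorem chernoff_kl_bound {Ω : Type*} [MeasurableSpace Ω] (P : Measure Ω)
    [IsProbabilityMeasure P] (n : ℕ) (hn : 0 < n) (X : ℕ → Ω → ℝ)
    (hmeas : ∀ i, Measurable (X i))
    (hindep : iIndepFun X P)
    (hident : ∀ i, P.map (X i) = P.map (X 0))
    (hbdd : ∀ i, ∀ᵐ ω ∂P, X i ω ∈ Set.Icc (0:ℝ) 1)
    (μ : ℝ) (hμ : μ ∈ Set.Ioo (0:ℝ) 1) (hmean : ∀ i, ∫ ω, X i ω ∂P = μ)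
    (x : ℝ) (hx : μ < x) :
    (P {ω | x ≤ (∑ i ∈ range n, X i ω) / n}).toReal ≤
      Real.exp (-(n : ℝ) * (x * Real.log (x / μ) + (1 - x) * Real.log ((1 - x) / (1 - μ)))) :=
  chernoff_kl_bound_general P n X hmeas hindep hbdd μ hμ hmean x hx
end

section
/- For any sequence of probability vectors (w_t) over K experts and loss vectors l_t in [0,1]^K for t = 1..T, if w_t is the exponential-weights distribution with learning rate eta_t = sqrt(8*log(K)/t) (time-varying), then the regret satisfies sum_t <w_t, l_t> - min_i sum_t l_{i,t} <= 2*sqrt(T*log(K)/2) + sqrt(log(K)/8). -/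
open Finset Real MeasureTheory ProbabilityTheory

/-
Potential-function argument. With `L_n` the cumulative losses of the first `n` rounds, put
`Φ_n = η_{n+1}⁻¹ log ((1/K) ∑ᵢ exp (-η_{n+1} L_{n,i}))`. Hoeffding's lemma for the distribution
`w_n` bounds the loss of round `n` by `Φ_n - Φ'_{n+1} + η_{n+1} / 8`, where `Φ'_{n+1}` is `Φ_{n+1}`
computed with the old rate `η_{n+1}`. As `exp Φ` is the power mean of exponent `η` of the
`exp (-L_{n,i})`, it is nondecreasing in `η`, so the decrease of the rate gives `Φ_{n+1} ≤ Φ'_{n+1}`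
and the bound telescopes. Finally `-Φ_T ≤ min_i L_{T,i} + log K / η_{T+1}`, which is
`√((T + 1) log K / 8)`, and `∑_{n<T} η_{n+1} / 8 ≤ √(T log K / 2)`.
-/

theorem sum_mul_exp_le_of_mem_Icc {ι : Type*} [Fintype ι] {p X : ι → ℝ} {a b : ℝ}
    (hp : ∀ i, 0 ≤ p i) (hp1 : ∑ i, p i = 1) (hX : ∀ i, X i ∈ Set.Icc a b) (t : ℝ) :
    ∑ i, p i * exp (t * X i) ≤ exp (t * ∑ i, p i * X i + (b - a) ^ 2 * t ^ 2 / 8) := by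
  let _ : MeasurableSpace ι := ⊤
  let μ := (PMF.ofFintype (fun i => ENNReal.ofReal (p i))
    (by rw [← ENNReal.ofReal_sum_of_nonneg fun i _ => hp i, hp1, ENNReal.ofReal_one])).toMeasure
  have hμ (f : ι → ℝ) : ∫ i, f i ∂μ = ∑ i, p i * f i := by
    simp [μ, PMF.integral_eq_sum, ENNReal.toReal_ofReal (hp _)]
  have hoeffding := (hasSubgaussianMGF_of_mem_Icc (μ := μ) (measurable_of_finite X).aemeasurable
    (ae_of_all _ hX)).mgf_le t
  simp only [mgf, hμ] at hoeffding
  set m := ∑ i, p i * X i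
  calc ∑ i, p i * exp (t * X i) = exp (t * m) * ∑ i, p i * exp (t * (X i - m)) := by
        rw [mul_sum]; congr! 1 with i; rw [mul_left_comm, ← exp_add]; ring_nf
    _ ≤ exp (t * m) * exp ((b - a) ^ 2 * t ^ 2 / 8) := by
        gcongr; refine hoeffding.trans_eq (congrArg exp ?_)
        push_cast; rw [Real.norm_eq_abs, div_pow, sq_abs]; ring
    _ = _ := (exp_add _ _).symm

section ExpWeights

variable {ι : Type*} [Fintype ι]

noncomputable def expWeights (η : ℝ) (c : ι → ℝ) (i : ι) : ℝ :=
  exp (-η * c i) / ∑ j, exp (-η * c j)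

noncomputable def potential (η : ℝ) (c : ι → ℝ) : ℝ :=
  log ((∑ i, exp (-η * c i)) / Fintype.card ι) / η

variable [Nonempty ι]

theorem sum_exp_pos (η : ℝ) (c : ι → ℝ) : 0 < ∑ i, exp (-η * c i) :=
  sum_pos (fun _ _ => exp_pos _) univ_nonempty

theorem expWeights_pos (η : ℝ) (c : ι → ℝ) (i : ι) : 0 < expWeights η c i :=
  div_pos (exp_pos _) (sum_exp_pos η c)

theorem sum_expWeights (η : ℝ) (c : ι → ℝ) : ∑ i, expWeights η c i = 1 := by
  simp only [expWeights, ← sum_div, div_self (sum_exp_pos η c).ne']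

theorem potential_zero (η : ℝ) : potential η (0 : ι → ℝ) = 0 := by
  simp [potential]

theorem potential_sub_potential (η : ℝ) (c c' : ι → ℝ) :
    potential η c - potential η c' =
      (log (∑ i, exp (-η * c i)) - log (∑ i, exp (-η * c' i))) / η := by
  have hcard : (Fintype.card ι : ℝ) ≠ 0 := by positivity
  simp only [potential, log_div (sum_exp_pos η _).ne' hcard]
  ring

theorem neg_potential_le {η : ℝ} (hη : 0 < η) (c : ι → ℝ) (i : ι) :
    -potential η c ≤ c i + log (Fintype.card ι) / η := by
  have hcard : (Fintype.card ι : ℝ) ≠ 0 := by positivity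
  have hsingle : -η * c i ≤ log (∑ j, exp (-η * c j)) := by
    rw [← log_exp (-η * c i)]
    exact log_le_log (exp_pos _)
      (single_le_sum (f := fun j => exp (-η * c j)) (fun j _ => (exp_pos _).le) (mem_univ i))
  calc -potential η c = (-log (∑ j, exp (-η * c j)) + log (Fintype.card ι)) / η := by
        rw [potential, log_div (sum_exp_pos η c).ne' hcard]; ring
    _ ≤ (η * c i + log (Fintype.card ι)) / η := by gcongr; linarith
    _ = c i + log (Fintype.card ι) / η := by rw [add_div, mul_div_cancel_left₀ _ hη.ne']

theorem potential_mono {a b : ℝ} (ha : 0 < a) (hab : a ≤ b) (c : ι → ℝ) :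
    potential a c ≤ potential b c := by
  have hb : 0 < b := ha.trans_le hab
  set n : ℝ := (Fintype.card ι : ℝ)
  have hn : 0 < n := by positivity
  have hmean (f : ι → ℝ) : ∑ i, n⁻¹ * f i = (∑ i, f i) / n := by
    rw [← mul_sum, inv_mul_eq_div]
  have hpow (i : ι) : exp (-a * c i) ^ (b / a) = exp (-b * c i) := by
    rw [← exp_mul]; congr 1; field_simp
  have hjensen : ((∑ i, exp (-a * c i)) / n) ^ (b / a) ≤ (∑ i, exp (-b * c i)) / n := by
    have := rpow_arith_mean_le_arith_mean_rpow univ (fun _ => n⁻¹) (fun i => exp (-a * c i))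
      (fun _ _ => by positivity) (by simp [n]) (fun _ _ => (exp_pos _).le)
      ((one_le_div ha).2 hab)
    simpa only [hpow, hmean] using this
  have hlog : b / a * log ((∑ i, exp (-a * c i)) / n) ≤ log ((∑ i, exp (-b * c i)) / n) := by
    have hpos : 0 < (∑ i, exp (-a * c i)) / n := div_pos (sum_exp_pos a c) hn
    rw [← log_rpow hpos]
    exact log_le_log (rpow_pos_of_pos hpos _) hjensen
  rw [potential, potential, div_le_div_iff₀ ha hb]
  calc log ((∑ i, exp (-a * c i)) / n) * b = b / a * log ((∑ i, exp (-a * c i)) / n) * a := by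
        field_simp
    _ ≤ _ := by gcongr

theorem sum_exp_add_eq_mul (η : ℝ) (c x : ι → ℝ) :
    ∑ i, exp (-η * (c + x) i) =
      (∑ i, exp (-η * c i)) * ∑ i, expWeights η c i * exp (-η * x i) := by
  simp only [mul_sum, expWeights, Pi.add_apply]
  congr! 1 with i
  field_simp
  rw [← exp_add]
  ring_nf

theorem sum_expWeights_mul_le {η : ℝ} (hη : 0 < η) (c x : ι → ℝ) (hx : ∀ i, x i ∈ Set.Icc 0 1) :
    ∑ i, expWeights η c i * x i ≤ potential η c - potential η (c + x) + η / 8 := by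
  have hoeffding := sum_mul_exp_le_of_mem_Icc (fun i => (expWeights_pos η c i).le)
    (sum_expWeights η c) hx (-η)
  have hZ := sum_exp_pos η c
  have hlog : log (∑ i, exp (-η * (c + x) i))
      ≤ log (∑ i, exp (-η * c i)) + (-η * ∑ i, expWeights η c i * x i + η ^ 2 / 8) := by
    have hpos : 0 < ∑ i, expWeights η c i * exp (-η * x i) :=
      sum_pos (fun i _ => mul_pos (expWeights_pos η c i) (exp_pos _)) univ_nonempty
    rw [sum_exp_add_eq_mul, log_mul hZ.ne' hpos.ne', ← log_exp (-η * _ + _)]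
    gcongr
    simpa using hoeffding
  have : ∑ i, expWeights η c i * x i - η / 8 ≤ potential η c - potential η (c + x) := by
    rw [potential_sub_potential, le_div_iff₀ hη]
    linarith
  linarith

theorem expWeights_regret_le (l : ℕ → ι → ℝ) (hl : ∀ t i, l t i ∈ Set.Icc 0 1) {r : ℕ → ℝ}
    (hr : ∀ t, 0 < r t) (hr_anti : Antitone r) (T : ℕ) (i : ι) :
    ∑ t ∈ range T, ∑ j, expWeights (r t) (∑ s ∈ range t, l s) j * l t j - ∑ t ∈ range T, l t i
      ≤ log (Fintype.card ι) / r T + ∑ t ∈ range T, r t / 8 := by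
  set Φ : ℕ → ℝ := fun n => potential (r n) (∑ s ∈ range n, l s)
  have hstep (t : ℕ) :
      ∑ j, expWeights (r t) (∑ s ∈ range t, l s) j * l t j ≤ Φ t - Φ (t + 1) + r t / 8 := by
    have hΦ : Φ (t + 1) ≤ potential (r t) (∑ s ∈ range (t + 1), l s) :=
      potential_mono (hr _) (hr_anti t.le_succ) _
    have := sum_expWeights_mul_le (hr t) (∑ s ∈ range t, l s) (l t) (hl t)
    rw [← sum_range_succ] at this
    linarith
  have htelescope := sum_le_sum fun t (_ : t ∈ range T) => hstep t
  rw [sum_add_distrib, sum_range_sub', show Φ 0 = 0 from potential_zero _] at htelescope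
  have hfinal := neg_potential_le (hr T) (∑ s ∈ range T, l s) i
  rw [Finset.sum_apply] at hfinal
  linarith

end ExpWeights

theorem sum_filter_lt_eq_sum_range {M : Type*} [AddCommMonoid M] {T : ℕ} (f : ℕ → M) (t : Fin T) :
    ∑ s ∈ univ.filter (· < t), f s = ∑ s ∈ range t, f s := by
  rw [filter_gt_eq_Iio, ← Nat.Iio_eq_range, ← Fin.map_valEmbedding_Iio, sum_map]
  rfl

theorem expWeights_regret_le_of_fin {ι : Type*} [Fintype ι] [Nonempty ι] {T : ℕ}
    (l : Fin T → ι → ℝ) (hl : ∀ t i, l t i ∈ Set.Icc 0 1) {r : ℕ → ℝ} (hr : ∀ t, 0 < r t)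
    (hr_anti : Antitone r) (i : ι) :
    ∑ t : Fin T, ∑ j, expWeights (r t) (∑ s ∈ univ.filter (· < t), l s) j * l t j
      - ∑ t, l t i
      ≤ log (Fintype.card ι) / r T + ∑ t ∈ range T, r t / 8 := by
  set l' : ℕ → ι → ℝ := fun s => if h : s < T then l ⟨s, h⟩ else 0
  have hl' (s : ℕ) (i : ι) : l' s i ∈ Set.Icc 0 1 := by
    by_cases h : s < T <;> simp [l', h, hl]
  have hl_eq (t : Fin T) : l t = l' t := by simp [l']
  simp only [hl_eq, sum_filter_lt_eq_sum_range l']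
  rw [Fin.sum_univ_eq_sum_range
      (fun t => ∑ j, expWeights (r t) (∑ s ∈ range t, l' s) j * l' t j),
    Fin.sum_univ_eq_sum_range (fun t => l' t i)]
  exact expWeights_regret_le l' hl' hr hr_anti T i

theorem sum_range_inv_sqrt_succ_le (T : ℕ) : ∑ n ∈ range T, (√(n + 1))⁻¹ ≤ 2 * √T := by
  induction T with
  | zero => simp
  | succ n ih =>
    rw [sum_range_succ, Nat.cast_succ]
    have hpos : 0 < √((n : ℝ) + 1) := sqrt_pos.2 (by positivity)
    have hsq : √((n : ℝ) + 1) ^ 2 = n + 1 := sq_sqrt (by positivity)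
    have : (√((n : ℝ) + 1))⁻¹ ≤ 2 * √((n : ℝ) + 1) - 2 * √n := by
      rw [inv_le_iff_one_le_mul₀ hpos]
      nlinarith [sq_nonneg (√((n : ℝ) + 1) - √n), sq_sqrt (Nat.cast_nonneg (α := ℝ) n)]
    linarith

theorem sum_range_sqrt_div_succ_le {κ : ℝ} (hκ : 0 ≤ κ) (T : ℕ) :
    ∑ t ∈ range T, √(8 * κ / (t + 1)) / 8 ≤ √(T * κ / 2) := by
  have hterm (t : ℕ) : √(8 * κ / (t + 1)) / 8 = √(8 * κ) / 8 * (√(t + 1))⁻¹ := by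
    rw [sqrt_div' _ (by positivity)]; ring
  calc ∑ t ∈ range T, √(8 * κ / (t + 1)) / 8
      = √(8 * κ) / 8 * ∑ t ∈ range T, (√(t + 1))⁻¹ := by simp only [hterm, mul_sum]
    _ ≤ √(8 * κ) / 8 * (2 * √T) := by gcongr; exact sum_range_inv_sqrt_succ_le T
    _ = √(T * κ / 2) := by
      rw [show T * κ / 2 = (8 * κ) * T / 4 ^ 2 by ring, sqrt_div' _ (by positivity),
        sqrt_sq (by norm_num), sqrt_mul (x := 8 * κ) (by positivity)]
      ring

theorem div_sqrt_div_succ_le {κ : ℝ} (hκ : 0 < κ) (T : ℕ) :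
    κ / √(8 * κ / (T + 1)) ≤ √(T * κ / 2) + √(κ / 8) := by
  have hT : (0 : ℝ) ≤ T := T.cast_nonneg
  have heq : κ / √(8 * κ / (T + 1)) = √((T + 1) * κ / 8) := by
    rw [div_eq_iff (sqrt_pos.2 (by positivity)).ne', ← sqrt_mul (by positivity),
      show (T + 1) * κ / 8 * (8 * κ / (T + 1)) = κ ^ 2 by field_simp, sqrt_sq hκ.le]
  rw [heq, sqrt_le_iff]
  refine ⟨by positivity, ?_⟩
  nlinarith [sq_sqrt (by positivity : 0 ≤ T * κ / 2), sq_sqrt (by positivity : 0 ≤ κ / 8),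
    mul_nonneg (sqrt_nonneg (T * κ / 2)) (sqrt_nonneg (κ / 8))]

theorem div_sqrt_add_sum_sqrt_le {κ : ℝ} (hκ : 0 < κ) (T : ℕ) :
    κ / √(8 * κ / (T + 1)) + ∑ t ∈ range T, √(8 * κ / (t + 1)) / 8
      ≤ 2 * √(T * κ / 2) + √(κ / 8) := by
  linarith [div_sqrt_div_succ_le hκ T, sum_range_sqrt_div_succ_le hκ.le T]

theorem exp_weights_time_varying_regret_general (K T : ℕ) (hK : 2 ≤ K)
    (l : Fin T → Fin K → ℝ) (hl : ∀ t i, l t i ∈ Set.Icc (0:ℝ) 1)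
    (η : ℕ → ℝ) (hη : ∀ t : ℕ, η t = Real.sqrt (8 * Real.log K / t))
    (w : Fin T → Fin K → ℝ)
    (hw : ∀ t i, w t i =
      Real.exp (-η (t.1 + 1) * ∑ s ∈ univ.filter (· < t), l s i) /
        ∑ j, Real.exp (-η (t.1 + 1) * ∑ s ∈ univ.filter (· < t), l s j)) :
    (∑ t, ∑ i, w t i * l t i) - (⨅ i, ∑ t, l t i) ≤
      2 * Real.sqrt (T * Real.log K / 2) + Real.sqrt (Real.log K / 8) := by
  have : Nonempty (Fin K) := ⟨⟨0, by omega⟩⟩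
  have hκ : 0 < log K := log_pos (by exact_mod_cast hK)
  have hrate (t : ℕ) : η (t + 1) = √(8 * log K / (t + 1)) := by rw [hη]; push_cast; rfl
  have hr (t : ℕ) : 0 < η (t + 1) := by rw [hrate]; positivity
  have hr_anti : Antitone fun t => η (t + 1) := fun a b hab => by
    simp only [hrate]; gcongr
  have hw' (t : Fin T) : w t = expWeights (η (t + 1)) (∑ s ∈ univ.filter (· < t), l s) :=
    funext fun i => by simp only [hw, expWeights, Finset.sum_apply]
  obtain ⟨i, hi⟩ := exists_eq_ciInf_of_finite (f := fun i => ∑ t, l t i)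
  have hregret := expWeights_regret_le_of_fin l hl hr hr_anti i
  simp only [hw', ← hi, Fintype.card_fin, hrate] at hregret ⊢
  linarith [div_sqrt_add_sum_sqrt_le hκ T]

/-- Regret bound for exponential weights with time-varying learning rate
`η_t = √(8 log K / t)`. -/
theorem exp_weights_time_varying_regret (K T : ℕ) (hK : 2 ≤ K) (hT : 1 ≤ T)
    (l : Fin T → Fin K → ℝ) (hl : ∀ t i, l t i ∈ Set.Icc (0:ℝ) 1)
    (η : ℕ → ℝ) (hη : ∀ t : ℕ, η t = Real.sqrt (8 * Real.log K / t))
    (w : Fin T → Fin K → ℝ)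
    (hw : ∀ t i, w t i =
      Real.exp (-η (t.1 + 1) * ∑ s ∈ univ.filter (· < t), l s i) /
        ∑ j, Real.exp (-η (t.1 + 1) * ∑ s ∈ univ.filter (· < t), l s j)) :
    (∑ t, ∑ i, w t i * l t i) - (⨅ i, ∑ t, l t i) ≤
      2 * Real.sqrt (T * Real.log K / 2) + Real.sqrt (Real.log K / 8) :=
  exp_weights_time_varying_regret_general K T hK l hl η hη w hw
end

section
/- For B_T ~ Binomial(T, 1/2), E[|B_T - T/2|] / sqrt(T) converges to 1/sqrt(2*pi) as T -> infinity. -/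
/-!
The partial sums of `C(T, k) (T - 2k)` telescope to `(j + 1) C(T, j + 1)`, and splitting the mean
absolute deviation at `m = ⌊T/2⌋` gives de Moivre's closed form `(m + 1) C(T, m + 1)`, which equals
`T C(2m, m) 2^T / (2 · 4^m)`. Stirling's formula gives `C(2m, m) ~ 4^m / √(π m)`, and `T / m → 2`.
-/

open Finset Real Filter Topology Stirling

theorem sum_range_choose_mul_sub_two_mul (T j : ℕ) :
    ∑ k ∈ range (j + 1), (T.choose k : ℝ) * (T - 2 * k) = (j + 1) * T.choose (j + 1) := by
  induction j with
  | zero => simp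
  | succ j ih =>
    rw [sum_range_succ, ih]
    rcases lt_or_ge j T with hjT | hTj
    · have h := congrArg (Nat.cast (R := ℝ)) (Nat.choose_succ_right_eq T (j + 1))
      push_cast [Nat.cast_sub (by omega : j + 1 ≤ T)] at h ⊢
      linear_combination -h
    · simp [Nat.choose_eq_zero_of_lt (by omega : T < j + 1),
        Nat.choose_eq_zero_of_lt (by omega : T < j + 1 + 1)]

theorem sum_range_choose_mul_abs_sub_half (T : ℕ) :
    ∑ k ∈ range (T + 1), (T.choose k : ℝ) * |(k : ℝ) - T / 2| =
      ((T / 2 + 1) * T.choose (T / 2 + 1) : ℕ) := by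
  have htotal := sum_range_choose_mul_sub_two_mul T T
  rw [Nat.choose_succ_self, Nat.cast_zero, mul_zero] at htotal
  rw [← sum_range_add_sum_Ico _ (by omega : T / 2 + 1 ≤ T + 1)] at htotal ⊢
  have hlow : ∑ k ∈ range (T / 2 + 1), (T.choose k : ℝ) * |(k : ℝ) - T / 2| =
      ∑ k ∈ range (T / 2 + 1), (T.choose k : ℝ) * (T - 2 * k) / 2 := by
    refine sum_congr rfl fun k hk => ?_
    have : 2 * (k : ℝ) ≤ T := by
      have := mem_range.mp hk
      exact_mod_cast (by omega : 2 * k ≤ T)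
    rw [abs_of_nonpos (by linarith)]
    ring
  have hhigh : ∑ k ∈ Ico (T / 2 + 1) (T + 1), (T.choose k : ℝ) * |(k : ℝ) - T / 2| =
      -∑ k ∈ Ico (T / 2 + 1) (T + 1), (T.choose k : ℝ) * (T - 2 * k) / 2 := by
    rw [← sum_neg_distrib]
    refine sum_congr rfl fun k hk => ?_
    have : (T : ℝ) < 2 * k := by
      have := (mem_Ico.mp hk).1
      exact_mod_cast (by omega : T < 2 * k)
    rw [abs_of_pos (by linarith)]
    ring
  rw [hlow, hhigh, ← sum_div, ← sum_div, sum_range_choose_mul_sub_two_mul] at *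
  push_cast
  linarith

theorem two_mul_four_pow_mul_choose_half_succ (T : ℕ) :
    2 * 4 ^ (T / 2) * ((T / 2 + 1) * T.choose (T / 2 + 1)) =
      T * (T / 2).centralBinom * 2 ^ T := by
  obtain ⟨n, rfl | rfl⟩ := Nat.even_or_odd' T
  · have h := Nat.choose_succ_right_eq (2 * n) n
    rw [show 2 * n - n = n by omega] at h
    rw [show 2 * n / 2 = n by omega, Nat.centralBinom, pow_mul]
    norm_num
    rw [mul_comm (n + 1), h]
    ring
  · have h := Nat.add_one_mul_choose_eq (2 * n) n
    rw [show (2 * n + 1) / 2 = n by omega, Nat.centralBinom, pow_succ, pow_mul]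
    norm_num
    rw [mul_comm (n + 1), ← h]
    ring

theorem stirlingSeq_two_mul_div_sq {n : ℕ} (hn : n ≠ 0) :
    stirlingSeq (2 * n) / stirlingSeq n ^ 2 = √n * n.centralBinom / 4 ^ n := by
  have hfac : ((2 * n).factorial : ℝ) = n.centralBinom * n.factorial * n.factorial := by
    have h := Nat.choose_mul_factorial_mul_factorial (by omega : n ≤ 2 * n)
    rw [show 2 * n - n = n by omega] at h
    exact_mod_cast h.symm
  have hn' : (0 : ℝ) < n := by positivity
  have hsqrt : √(2 * (2 * (n : ℝ))) = 2 * √n := by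
    rw [← mul_assoc, sqrt_mul' _ hn'.le, show (2 : ℝ) * 2 = 2 ^ 2 by norm_num, sqrt_sq zero_le_two]
  have hpow : (2 * n / rexp 1) ^ (2 * n) = 4 ^ n * ((n / rexp 1) ^ n) ^ 2 := by
    rw [pow_mul, pow_right_comm _ n 2, ← mul_pow]
    ring
  rw [stirlingSeq, stirlingSeq]
  push_cast
  rw [hfac, hsqrt, hpow]
  field_simp
  rw [sq_sqrt (by positivity), sq_sqrt hn'.le]
  ring

theorem tendsto_sqrt_mul_centralBinom_div_four_pow :
    Tendsto (fun n : ℕ => √n * n.centralBinom / 4 ^ n) atTop (𝓝 (1 / √π)) := by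
  have h := (tendsto_stirlingSeq_sqrt_pi.comp (tendsto_id.const_mul_atTop' two_pos)).div
    (tendsto_stirlingSeq_sqrt_pi.pow 2) (by positivity)
  rw [sq_sqrt pi_pos.le, sqrt_div_self'] at h
  exact h.congr' ((eventually_ne_atTop 0).mono fun n hn => stirlingSeq_two_mul_div_sq hn)

theorem tendsto_nat_div_two_div_self :
    Tendsto (fun T : ℕ => ((T / 2 : ℕ) : ℝ) / T) atTop (𝓝 (1 / 2)) := by
  have h := (tendsto_nat_floor_mul_div_atTop (R := ℝ) (a := 1 / 2) (by norm_num)).comp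
    tendsto_natCast_atTop_atTop
  refine h.congr fun T => ?_
  simp [← Nat.floor_div_eq_div (K := ℝ), div_eq_inv_mul]

theorem sum_range_choose_mul_abs_sub_half_div_sqrt_eq {T : ℕ} (hT : 2 ≤ T) :
    ((∑ k ∈ range (T + 1), (T.choose k : ℝ) * |(k : ℝ) - T / 2|) / 2 ^ T) / √T =
      √(T / 2 : ℕ) * (T / 2).centralBinom / 4 ^ (T / 2) * (√(T / (T / 2 : ℕ)) / 2) := by
  have hX := congrArg (Nat.cast (R := ℝ)) (two_mul_four_pow_mul_choose_half_succ T)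
  push_cast at hX
  have hn : (0 : ℝ) < (T / 2 : ℕ) := by norm_cast; omega
  have hT' : (0 : ℝ) < T := by positivity
  rw [sum_range_choose_mul_abs_sub_half, sqrt_div' _ hn.le]
  field_simp
  rw [sq_sqrt hT'.le]
  push_cast
  linear_combination hX

/-- The mean absolute deviation of `Binomial(T, 1/2)` satisfies
`E|B_T - T/2| / √T → 1/√(2π)`. -/
theorem binomial_mad_asymptotics :
    Filter.Tendsto
      (fun T : ℕ =>
        ((∑ k ∈ range (T + 1), (T.choose k : ℝ) * |(k : ℝ) - T / 2|) / 2 ^ T) / Real.sqrt T)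
      Filter.atTop (nhds (1 / Real.sqrt (2 * Real.pi))) := by
  have hcentral := tendsto_sqrt_mul_centralBinom_div_four_pow.comp
    (Nat.tendsto_div_const_atTop two_ne_zero)
  have hratio : Tendsto (fun T : ℕ => √(T / (T / 2 : ℕ)) / 2) atTop (𝓝 (√2 / 2)) := by
    have h := (tendsto_nat_div_two_div_self.inv₀ (by norm_num)).sqrt.div_const 2
    simpa only [inv_div, one_div, inv_inv] using h
  have hlimit : 1 / √π * (√2 / 2) = 1 / √(2 * π) := by
    rw [sqrt_mul zero_le_two, ← div_sqrt (x := 2)]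
    field_simp
    norm_num
  rw [← hlimit]
  refine (hcentral.mul hratio).congr' ?_
  filter_upwards [eventually_ge_atTop 2] with T hT
  exact (sum_range_choose_mul_abs_sub_half_div_sqrt_eq hT).symm
end

section
/- Let w be a probability vector over K experts and let l in [0,1]^K. For eta > 0, define the mix loss m = -(1/eta)*log(sum_i w_i*exp(-eta*l_i)). Then <w,l> - m <= (eta/8), and also <w,l> - m <= (e^{eta} - eta - 1)/eta * sum_i w_i * l_i^2. -/
open Finset
open Finset

lemma quad_le_exp' (x : ℝ) (hx : 0 ≤ x) : 1 + x + x ^ 2 / 2 ≤ Real.exp x := by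
  have hf : ∀ t : ℝ, HasDerivAt (fun t : ℝ => Real.exp t - 1 - t - t ^ 2 / 2)
      (Real.exp t - 1 - t) t := by
    intro t
    have h := (((Real.hasDerivAt_exp t).sub_const 1).sub (hasDerivAt_id t)).sub
      (((hasDerivAt_pow 2 t)).div_const 2)
    refine h.congr_deriv ?_
    norm_num
  have hmono : Monotone (fun t : ℝ => Real.exp t - 1 - t - t ^ 2 / 2) := by
    apply monotone_of_hasDerivAt_nonneg hf
    intro t
    have := Real.add_one_le_exp t
    simp only [Pi.zero_apply]
    linarith
  have := hmono hx
  simp at this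
  linarith

lemma exp_neg_le_quad (x : ℝ) (hx : 0 ≤ x) : Real.exp (-x) ≤ 1 - x + x ^ 2 / 2 := by
  have hf : ∀ t : ℝ, HasDerivAt (fun t : ℝ => 1 - t + t ^ 2 / 2 - Real.exp (-t))
      (-1 + t + Real.exp (-t)) t := by
    intro t
    have he : HasDerivAt (fun t : ℝ => Real.exp (-t)) (Real.exp (-t) * (-1)) t :=
      (Real.hasDerivAt_exp (-t)).comp t (hasDerivAt_neg t)
    have h := (((hasDerivAt_const t (1:ℝ)).sub (hasDerivAt_id t)).add
      ((hasDerivAt_pow 2 t).div_const 2)).sub he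
    refine h.congr_deriv ?_
    norm_num
  have hmono : Monotone (fun t : ℝ => 1 - t + t ^ 2 / 2 - Real.exp (-t)) := by
    apply monotone_of_hasDerivAt_nonneg hf
    intro t
    have := Real.add_one_le_exp (-t)
    simp only [Pi.zero_apply]
    linarith
  have := hmono hx
  simp at this
  linarith
open Finset

lemma bernoulli_hoeffding (p t : ℝ) (hp0 : 0 ≤ p) (hp1 : p ≤ 1) (ht : 0 ≤ t) :
    Real.log (1 - p + p * Real.exp (-t)) ≤ -(p * t) + t ^ 2 / 8 := by
  set A : ℝ → ℝ := fun s => 1 - p + p * Real.exp (-s) with hAdef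
  have hApos : ∀ s : ℝ, 0 ≤ s → 0 < A s := by
    intro s hs
    have he : Real.exp (-s) ≤ 1 := Real.exp_le_one_iff.2 (by linarith)
    have hep : 0 < Real.exp (-s) := Real.exp_pos _
    have h1 : 0 ≤ (1 - p) * (1 - Real.exp (-s)) :=
      mul_nonneg (by linarith) (by linarith)
    simp only [hAdef]
    nlinarith
  have hA : ∀ s : ℝ, HasDerivAt A (-(p * Real.exp (-s))) s := by
    intro s
    have he : HasDerivAt (fun s : ℝ => Real.exp (-s)) (Real.exp (-s) * (-1)) s :=
      (Real.hasDerivAt_exp (-s)).comp s (hasDerivAt_neg s)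
    have h := (hasDerivAt_const s (1 - p)).add (he.const_mul p)
    refine h.congr_deriv ?_
    ring
  -- g is the derivative of f
  set g : ℝ → ℝ := fun s => p - p * Real.exp (-s) / A s - s / 4 with hgdef
  set G : ℝ → ℝ := fun s =>
    p * Real.exp (-s) / A s - (p * Real.exp (-s) / A s) ^ 2 - 1 / 4 with hGdef
  have hg : ∀ s : ℝ, 0 ≤ s → HasDerivAt g (G s) s := by
    intro s hs
    have hAne : A s ≠ 0 := (hApos s hs).ne'
    have hnum : HasDerivAt (fun s : ℝ => p * Real.exp (-s)) (-(p * Real.exp (-s))) s := by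
      have he : HasDerivAt (fun s : ℝ => Real.exp (-s)) (Real.exp (-s) * (-1)) s :=
        (Real.hasDerivAt_exp (-s)).comp s (hasDerivAt_neg s)
      have := he.const_mul p
      refine this.congr_deriv ?_; ring
    have hdiv : HasDerivAt (fun s : ℝ => p * Real.exp (-s) / A s)
        ((-(p * Real.exp (-s)) * A s - p * Real.exp (-s) * -(p * Real.exp (-s))) / A s ^ 2) s :=
      hnum.div (hA s) hAne
    have h := ((hasDerivAt_const s p).sub hdiv).sub ((hasDerivAt_id s).div_const 4)
    refine h.congr_deriv ?_
    simp only [hGdef]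
    field_simp
    ring
  have hf : ∀ s : ℝ, 0 ≤ s →
      HasDerivAt (fun s : ℝ => Real.log (A s) + p * s - s ^ 2 / 8) (g s) s := by
    intro s hs
    have hAne : A s ≠ 0 := (hApos s hs).ne'
    have hlog : HasDerivAt (fun s : ℝ => Real.log (A s)) (-(p * Real.exp (-s)) / A s) s :=
      (hA s).log hAne
    have h := (hlog.add ((hasDerivAt_id s).const_mul p)).sub ((hasDerivAt_pow 2 s).div_const 8)
    refine h.congr_deriv ?_
    simp only [hgdef]
    push_cast
    ring
  -- G ≤ 0
  have hG0 : ∀ s : ℝ, G s ≤ 0 := by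
    intro s
    simp only [hGdef]
    nlinarith [sq_nonneg (p * Real.exp (-s) / A s - 1 / 2)]
  -- g antitone on Ici 0, g 0 = 0, so g ≤ 0 on Ici 0
  have hganti : AntitoneOn g (Set.Ici 0) := by
    apply antitoneOn_of_hasDerivWithinAt_nonpos (convex_Ici 0)
    · exact fun s hs => ((hg s hs).continuousAt).continuousWithinAt
    · intro s hs
      rw [interior_Ici] at hs
      exact (hg s (le_of_lt hs)).hasDerivWithinAt
    · intro s hs
      exact hG0 s
  have hg0 : g 0 = 0 := by
    simp only [hgdef, hAdef]
    simp
  have hgle : ∀ s : ℝ, 0 ≤ s → g s ≤ 0 := by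
    intro s hs
    have := hganti (Set.self_mem_Ici) hs hs
    rwa [hg0] at this
  -- f antitone on Ici 0
  have hfanti : AntitoneOn (fun s : ℝ => Real.log (A s) + p * s - s ^ 2 / 8) (Set.Ici 0) := by
    apply antitoneOn_of_hasDerivWithinAt_nonpos (convex_Ici 0) (f' := g)
    · exact fun s hs => ((hf s hs).continuousAt).continuousWithinAt
    · intro s hs
      rw [interior_Ici] at hs
      exact (hf s (le_of_lt hs)).hasDerivWithinAt
    · intro s hs
      rw [interior_Ici] at hs
      exact hgle s (le_of_lt hs)
  have hf0 : Real.log (A 0) + p * 0 - (0:ℝ) ^ 2 / 8 = 0 := by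
    simp only [hAdef]
    simp
  have := hfanti (Set.self_mem_Ici) ht ht
  simp only at this
  rw [hf0] at this
  simp only [hAdef] at this
  linarith

/-- Mix-loss bounds: for a probability vector `w`, losses `l ∈ [0,1]^K` and `η > 0`, the gap
between the weighted loss and the mix loss `m = -(1/η) log ∑ wᵢ exp(-η lᵢ)` is at most `η/8`,
and more precisely at most `((e^η - η - 1)/η) ∑ wᵢ lᵢ²`. -/
theorem mix_loss_gap_bounds (K : ℕ) (hK : 0 < K) (η : ℝ) (hη : 0 < η)
    (w l : Fin K → ℝ) (hw : ∀ i, 0 ≤ w i) (hw1 : ∑ i, w i = 1)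
    (hl : ∀ i, l i ∈ Set.Icc (0:ℝ) 1) :
    (∑ i, w i * l i) - (-(1 / η) * Real.log (∑ i, w i * Real.exp (-η * l i))) ≤ η / 8 ∧
    (∑ i, w i * l i) - (-(1 / η) * Real.log (∑ i, w i * Real.exp (-η * l i))) ≤
      ((Real.exp η - η - 1) / η) * ∑ i, w i * l i ^ 2 := by
  set L := ∑ i, w i * l i with hLdef
  set S := ∑ i, w i * Real.exp (-η * l i) with hSdef
  set Q := ∑ i, w i * l i ^ 2 with hQdef
  have hL0 : 0 ≤ L := Finset.sum_nonneg fun i _ => mul_nonneg (hw i) (hl i).1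
  have hL1 : L ≤ 1 := by
    rw [← hw1]
    exact Finset.sum_le_sum fun i _ => by
      nlinarith [(hl i).2, hw i, (hl i).1]
  have hSpos : 0 < S := by
    obtain ⟨i, hi⟩ : ∃ i, 0 < w i := by
      by_contra h
      push_neg at h
      have : ∀ i, w i = 0 := fun i => le_antisymm (h i) (hw i)
      simp [this] at hw1
    exact Finset.sum_pos' (fun j _ => mul_nonneg (hw j) (Real.exp_pos _).le)
      ⟨i, Finset.mem_univ i, mul_pos hi (Real.exp_pos _)⟩
  -- First bound (Hoeffding)
  have hconv : ∀ i, Real.exp (-η * l i) ≤ 1 - l i + l i * Real.exp (-η) := by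
    intro i
    have h := convexOn_exp.2 (Set.mem_univ (0:ℝ)) (Set.mem_univ (-η))
      (by linarith [(hl i).2] : (0:ℝ) ≤ 1 - l i) (hl i).1 (by ring)
    simp only [smul_eq_mul, mul_zero, zero_add, Real.exp_zero, mul_one] at h
    calc Real.exp (-η * l i) = Real.exp (l i * -η) := by ring_nf
      _ ≤ (1 - l i) * 1 + l i * Real.exp (-η) := by simpa using h
      _ = 1 - l i + l i * Real.exp (-η) := by ring
  have hS_le1 : S ≤ 1 - L + L * Real.exp (-η) := by
    have h1 : S ≤ ∑ i, w i * (1 - l i + l i * Real.exp (-η)) :=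
      Finset.sum_le_sum fun i _ => mul_le_mul_of_nonneg_left (hconv i) (hw i)
    have h2 : ∑ i, w i * (1 - l i + l i * Real.exp (-η)) = 1 - L + L * Real.exp (-η) := by
      have he : ∑ i, w i * (1 - l i + l i * Real.exp (-η))
          = (∑ i, w i) - (∑ i, w i * l i) + (∑ i, w i * l i) * Real.exp (-η) := by
        simp only [Finset.sum_mul, Finset.mul_sum, ← Finset.sum_sub_distrib,
          ← Finset.sum_add_distrib]
        exact Finset.sum_congr rfl fun i _ => by ring
      rw [he, hw1]
    linarith
  have hlog1 : Real.log S ≤ -(L * η) + η ^ 2 / 8 := by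
    have := Real.log_le_log hSpos hS_le1
    exact this.trans (bernoulli_hoeffding L η hL0 hL1 hη.le)
  have bound1 : L - (-(1 / η) * Real.log S) ≤ η / 8 := by
    have h := mul_le_mul_of_nonneg_left hlog1 (le_of_lt (one_div_pos.2 hη))
    have he : (1 / η) * (-(L * η) + η ^ 2 / 8) = -L + η / 8 := by
      field_simp
    rw [he] at h
    linarith
  refine ⟨bound1, ?_⟩
  -- Second bound
  set c := (Real.exp η - η - 1) / η ^ 2 with hcdef
  have hc : 1 / 2 ≤ c := by
    rw [hcdef, le_div_iff₀ (by positivity : (0:ℝ) < η ^ 2)]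
    nlinarith [quad_le_exp' η hη.le]
  have hpt : ∀ i, Real.exp (-η * l i) ≤ 1 - η * l i + c * η ^ 2 * l i ^ 2 := by
    intro i
    have h1 : Real.exp (-(η * l i)) ≤ 1 - η * l i + (η * l i) ^ 2 / 2 :=
      exp_neg_le_quad (η * l i) (mul_nonneg hη.le (hl i).1)
    have h2 : (η * l i) ^ 2 / 2 ≤ c * η ^ 2 * l i ^ 2 := by
      nlinarith [sq_nonneg (η * l i), mul_nonneg (by linarith : (0:ℝ) ≤ c - 1/2) (sq_nonneg (η * l i))]
    calc Real.exp (-η * l i) = Real.exp (-(η * l i)) := by ring_nf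
      _ ≤ 1 - η * l i + (η * l i) ^ 2 / 2 := h1
      _ ≤ 1 - η * l i + c * η ^ 2 * l i ^ 2 := by linarith
  have hS_le2 : S ≤ 1 - η * L + c * η ^ 2 * Q := by
    have h1 : S ≤ ∑ i, w i * (1 - η * l i + c * η ^ 2 * l i ^ 2) :=
      Finset.sum_le_sum fun i _ => mul_le_mul_of_nonneg_left (hpt i) (hw i)
    have h2 : ∑ i, w i * (1 - η * l i + c * η ^ 2 * l i ^ 2) = 1 - η * L + c * η ^ 2 * Q := by
      have he : ∑ i, w i * (1 - η * l i + c * η ^ 2 * l i ^ 2)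
          = (∑ i, w i) - η * (∑ i, w i * l i) + c * η ^ 2 * (∑ i, w i * l i ^ 2) := by
        simp only [Finset.sum_mul, Finset.mul_sum, ← Finset.sum_sub_distrib,
          ← Finset.sum_add_distrib]
        exact Finset.sum_congr rfl fun i _ => by ring
      rw [he, hw1]
    linarith
  have hlog2 : Real.log S ≤ -(η * L) + c * η ^ 2 * Q := by
    have := Real.log_le_sub_one_of_pos hSpos
    linarith
  have h := mul_le_mul_of_nonneg_left hlog2 (le_of_lt (one_div_pos.2 hη))
  have he : (1 / η) * (-(η * L) + c * η ^ 2 * Q) = -L + ((Real.exp η - η - 1) / η) * Q := by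
    rw [hcdef]
    field_simp
  rw [he] at h
  linarith
end
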